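/- Let A^S ⊆ A and let B^S be the set of points of A^S on the boundary of vrs(A^S). Then vrs(B^S) = vrs(A^S). Consequently any point of A exterior to vrs(B^S) is exterior to vrs(A^S). -/

import Mathlib

open scoped Classical
open Finset

noncomputable section

/-- The VRS (free-disposal convex) hull of a finite set of points in ℝ^m. -/
def vrs {m : ℕ} (S : Finset (Fin m → ℝ)) : Set (Fin m → ℝ) :=
  {z | ∃ l : (Fin m → ℝ) → ℝ, (∀ a, 0 ≤ l a) ∧ (∑ a ∈ S, l a) = 1 ∧
    ∀ k, z k ≤ ∑ a ∈ S, l a * a k}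

/-- The frame of `A`: the points of `A` that are extreme points of `vrs A`. -/
def frame {m : ℕ} (A : Finset (Fin m → ℝ)) : Finset (Fin m → ℝ) :=
  A.filter fun a => a ∈ Set.extremePoints ℝ (vrs A)

/-
Removing a point `a` of `S` that lies in the interior of `vrs S` does not change `vrs S`.
Indeed `a + ε𝟙 ∈ vrs S` for some `ε > 0`, i.e. `a + ε𝟙 ≤ ∑ λ_b b`; the weight `λ_a` cannot be `1`
(that would give `a + ε𝟙 ≤ a`), so `(1 - λ_a) a ≤ ∑_{b ≠ a} λ_b b` and rescaling shows
`a ∈ vrs (S \ {a})`. Peeling off interior points one at a time leaves exactly the points of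
`S` on the frontier of `vrs S`, whose hull is therefore still `vrs S`.
-/

theorem exists_pos_add_smul_mem_of_mem_interior {E : Type*} [AddCommGroup E] [Module ℝ E]
    [TopologicalSpace E] [ContinuousAdd E] [ContinuousSMul ℝ E] {s : Set E} {a : E}
    (ha : a ∈ interior s) (v : E) : ∃ ε : ℝ, 0 < ε ∧ a + ε • v ∈ s := by
  have hcont : Continuous fun t : ℝ => a + t • v := by fun_prop
  have hlim := (hcont.tendsto' 0 a (by simp)).mono_left (nhdsWithin_le_nhds (s := Set.Ioi 0))
  obtain ⟨ε, hεs, hε⟩ :=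
    ((hlim.eventually (mem_interior_iff_mem_nhds.mp ha)).and self_mem_nhdsWithin).exists
  exact ⟨ε, hε, hεs⟩

section VRS

variable {m : ℕ}

theorem mem_vrs_iff {S : Finset (Fin m → ℝ)} {z : Fin m → ℝ} :
    z ∈ vrs S ↔ ∃ l : (Fin m → ℝ) → ℝ, (∀ a, 0 ≤ l a) ∧ ∑ a ∈ S, l a = 1 ∧
      z ≤ ∑ a ∈ S, l a • a := by
  simp only [vrs, Set.mem_ofPred_eq, Pi.le_def, Finset.sum_apply, Pi.smul_apply, smul_eq_mul]

theorem mem_vrs_of_le {S : Finset (Fin m → ℝ)} {x z : Fin m → ℝ} (hx : x ∈ vrs S) (hzx : z ≤ x) :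
    z ∈ vrs S := by
  obtain ⟨l, hl0, hl1, hxl⟩ := mem_vrs_iff.mp hx
  exact mem_vrs_iff.mpr ⟨l, hl0, hl1, hzx.trans hxl⟩

theorem subset_vrs (S : Finset (Fin m → ℝ)) : (S : Set (Fin m → ℝ)) ⊆ vrs S := by
  intro a ha
  refine mem_vrs_iff.mpr ⟨Pi.single a 1, fun b => ?_, ?_, ?_⟩
  · by_cases hb : b = a <;> simp [hb]
  · simp [Finset.sum_pi_single', Finset.mem_coe.mp ha]
  · simp [Pi.single_apply, Finset.mem_coe.mp ha]

theorem convex_vrs (S : Finset (Fin m → ℝ)) : Convex ℝ (vrs S) := by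
  intro x hx y hy s t hs ht hst
  obtain ⟨lx, hlx0, hlx1, hxl⟩ := mem_vrs_iff.mp hx
  obtain ⟨ly, hly0, hly1, hyl⟩ := mem_vrs_iff.mp hy
  refine mem_vrs_iff.mpr ⟨fun a => s * lx a + t * ly a,
    fun a => by have := hlx0 a; have := hly0 a; positivity, ?_, ?_⟩
  · simp only [Finset.sum_add_distrib, ← Finset.mul_sum, hlx1, hly1, mul_one, hst]
  · calc s • x + t • y ≤ s • ∑ a ∈ S, lx a • a + t • ∑ a ∈ S, ly a • a := by gcongr
      _ = ∑ a ∈ S, (s * lx a + t * ly a) • a := by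
        simp only [Finset.smul_sum, smul_smul, add_smul, Finset.sum_add_distrib]

theorem vrs_subset_vrs {S T : Finset (Fin m → ℝ)} (h : (S : Set (Fin m → ℝ)) ⊆ vrs T) :
    vrs S ⊆ vrs T := by
  intro z hz
  obtain ⟨l, hl0, hl1, hzl⟩ := mem_vrs_iff.mp hz
  exact mem_vrs_of_le ((convex_vrs T).sum_mem (fun a _ => hl0 a) hl1 h) hzl

theorem mem_vrs_erase_of_add_smul_one_mem (hm : 0 < m) {S : Finset (Fin m → ℝ)}
    {a : Fin m → ℝ} (haS : a ∈ S) {ε : ℝ} (hε : 0 < ε) (h : a + ε • 1 ∈ vrs S) :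
    a ∈ vrs (S.erase a) := by
  obtain ⟨l, hl0, hl1, hal⟩ := mem_vrs_iff.mp h
  set r := ∑ b ∈ S.erase a, l b
  set y := ∑ b ∈ S.erase a, l b • b
  have hr : l a = 1 - r := by linarith [Finset.add_sum_erase S l haS]
  have hry : r • a + ε • 1 ≤ y := by
    rw [← Finset.add_sum_erase S _ haS, hr, sub_smul, one_smul] at hal
    convert add_le_add_right hal (r • a - a) using 1 <;> abel
  have hr0 : 0 < r := by
    refine (Finset.sum_nonneg fun b _ => hl0 b).lt_of_ne fun hr0 => ?_
    have hy0 : y = 0 := Finset.sum_eq_zero fun b hb => by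
      rw [(Finset.sum_eq_zero_iff_of_nonneg fun b _ => hl0 b).mp hr0.symm b hb, zero_smul]
    rw [show r = 0 from hr0.symm, zero_smul, zero_add, hy0] at hry
    have := hry ⟨0, hm⟩
    simp only [Pi.smul_apply, Pi.one_apply, smul_eq_mul, mul_one, Pi.zero_apply] at this
    linarith
  refine mem_vrs_iff.mpr
    ⟨fun b => r⁻¹ * l b, fun b => mul_nonneg (inv_nonneg.mpr hr0.le) (hl0 b), ?_, ?_⟩
  · rw [← Finset.mul_sum, inv_mul_cancel₀ hr0.ne']
  · simp only [mul_smul, ← Finset.smul_sum]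
    rw [le_inv_smul_iff_of_pos hr0]
    exact le_trans (le_add_of_nonneg_right (smul_nonneg hε.le zero_le_one)) hry

theorem vrs_erase_of_mem_interior (hm : 0 < m) {S : Finset (Fin m → ℝ)} {a : Fin m → ℝ}
    (haS : a ∈ S) (ha : a ∈ interior (vrs S)) : vrs (S.erase a) = vrs S := by
  obtain ⟨ε, hε, hmem⟩ := exists_pos_add_smul_mem_of_mem_interior ha 1
  refine (vrs_subset_vrs fun b hb => subset_vrs S (Finset.mem_of_mem_erase hb)).antisymm
    (vrs_subset_vrs fun b hb => ?_)
  by_cases hba : b = a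
  · subst hba
    exact mem_vrs_erase_of_add_smul_one_mem hm haS hε hmem
  · exact subset_vrs _ (Finset.mem_erase.mpr ⟨hba, hb⟩)

theorem vrs_filter_frontier (hm : 0 < m) (S : Finset (Fin m → ℝ)) :
    vrs (S.filter fun a => a ∈ frontier (vrs S)) = vrs S := by
  generalize hV : vrs S = V
  induction S using Finset.strongInduction with
  | H S ih =>
    by_cases hS : ∀ a ∈ S, a ∈ frontier V
    · rw [Finset.filter_true_of_mem hS, hV]
    push Not at hS
    obtain ⟨a, haS, haV⟩ := hS
    have ha : a ∈ interior (vrs S) := by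
      rw [← self_sdiff_frontier, hV]
      exact ⟨hV ▸ subset_vrs S haS, haV⟩
    have := ih _ (Finset.erase_ssubset haS) ((vrs_erase_of_mem_interior hm haS ha).trans hV)
    rwa [Finset.filter_erase,
      Finset.erase_eq_of_notMem fun h => haV (Finset.mem_filter.mp h).2] at this

end VRS

theorem stmt12_general {m : ℕ} (hm : 0 < m) (A AS : Finset (Fin m → ℝ)) :
    vrs (AS.filter fun a => a ∈ frontier (vrs AS)) = vrs AS ∧
    ∀ b ∈ A, b ∉ vrs (AS.filter fun a => a ∈ frontier (vrs AS)) → b ∉ vrs AS := by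
  have h := vrs_filter_frontier hm AS
  exact ⟨h, fun b _ hb => h ▸ hb⟩

theorem stmt12 {m : ℕ} (hm : 0 < m) (A AS : Finset (Fin m → ℝ)) (hAS : AS ⊆ A) :
    vrs (AS.filter fun a => a ∈ frontier (vrs AS)) = vrs AS ∧
    ∀ b ∈ A, b ∉ vrs (AS.filter fun a => a ∈ frontier (vrs AS)) → b ∉ vrs AS :=
  stmt12_general hm A AS
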